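/- arXiv:math/0611667 — 4 statements merged into one kernel-verified Lean document; each statement's English description precedes it below -/
import Mathlib

section
/- Fix a polynomial p on ℂ with leading coefficient a₀ and degree d, a point ξ ∈ ℂ, and r > 0. Then there exists a constant c > 0, depending only on p and r (one may take c = 4^d/(2 r^d)), such that for every function f holomorphic on the closed disk {z : |z - ξ| ≤ r} satisfying |p(z)f(z)| ≤ M e^{A|z|} on that disk for some A > 0 and M ≥ 0, one has |a₀ f(ξ)| ≤ c e^{A(|ξ|+r)} M. -/
/-! Move every root `ρ` of `p` with `‖ρ - ξ‖ < r / 2` to the point `ξ + r`. The resulting polynomial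
`q` has the same leading coefficient, each of its linear factors has size at least `r / 2` at `ξ`,
and on the circle `‖z - ξ‖ = r` each moved factor is at most `4` times the original one, since both
are comparable to `r` there. The maximum modulus principle for `q * f` on the disk then gives
`‖a₀‖ (r / 2) ^ d ‖f ξ‖ ≤ ‖q ξ * f ξ‖ ≤ 4 ^ d M exp (A (‖ξ‖ + r))`. -/

open Polynomial Metric

theorem Complex.norm_le_of_forall_mem_sphere_norm_le {E F : Type*} [NormedAddCommGroup E]
    [NormedSpace ℂ E] [Nontrivial E] [NormedAddCommGroup F] [NormedSpace ℂ F] {f : E → F} {ξ : E}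
    {r C : ℝ}
    (hr : 0 < r) (hf : DifferentiableOn ℂ f (closedBall ξ r))
    (hC : ∀ z ∈ sphere ξ r, ‖f z‖ ≤ C) : ‖f ξ‖ ≤ C := by
  refine norm_le_of_forall_mem_frontier_norm_le (isBounded_ball (x := ξ) (r := r)) ?_ ?_ ?_
  · exact DifferentiableOn.diffContOnCl (by rwa [closure_ball ξ hr.ne'])
  · rwa [frontier_ball ξ hr.ne']
  · rw [closure_ball ξ hr.ne']
    exact mem_closedBall_self hr.le

theorem norm_eval_C_mul_prod_X_sub_C (a : ℂ) (s : Multiset ℂ) (z : ℂ) :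
    ‖(C a * (s.map fun ρ => X - C ρ).prod).eval z‖ = ‖a‖ * (s.map fun ρ => ‖z - ρ‖).prod := by
  rw [eval_mul, eval_C, norm_mul, eval_multiset_prod]
  congr 1
  exact (map_multiset_prod (normHom : ℂ →*₀ ℝ) _).trans (by simp [Multiset.map_map])

noncomputable def moveRoot (ξ : ℂ) (r : ℝ) (ρ : ℂ) : ℂ :=
  if r / 2 ≤ ‖ρ - ξ‖ then ρ else ξ + r

theorem half_le_norm_sub_moveRoot (ξ : ℂ) (r : ℝ) (ρ : ℂ) : r / 2 ≤ ‖ξ - moveRoot ξ r ρ‖ := by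
  unfold moveRoot
  split_ifs with h
  · rwa [norm_sub_rev]
  · rw [sub_add_cancel_left, norm_neg, Complex.norm_real, Real.norm_eq_abs]
    linarith [le_abs_self r, abs_nonneg r]

theorem norm_sub_moveRoot_le {ξ z : ℂ} {r : ℝ} (hz : ‖z - ξ‖ = r) (ρ : ℂ) :
    ‖z - moveRoot ξ r ρ‖ ≤ 4 * ‖z - ρ‖ := by
  unfold moveRoot
  split_ifs with h
  · linarith [norm_nonneg (z - ρ)]
  · have hzρ : r / 2 ≤ ‖z - ρ‖ := by
      linarith [norm_sub_le_norm_sub_add_norm_sub z ρ ξ]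
    have hshift : ‖z - (ξ + r)‖ ≤ 2 * r := by
      calc ‖z - (ξ + r)‖ = ‖(z - ξ) - r‖ := by rw [sub_add_eq_sub_sub]
        _ ≤ ‖z - ξ‖ + ‖(r : ℂ)‖ := norm_sub_le _ _
        _ = 2 * r := by
          rw [Complex.norm_real, Real.norm_of_nonneg (hz ▸ norm_nonneg _), hz]; ring
    linarith

theorem pow_card_le_prod_map_norm_sub_moveRoot (ξ : ℂ) {r : ℝ} (hr : 0 ≤ r) (s : Multiset ℂ) :
    (r / 2) ^ Multiset.card s ≤ (s.map fun ρ => ‖ξ - moveRoot ξ r ρ‖).prod := by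
  calc (r / 2) ^ Multiset.card s = (s.map fun _ => r / 2).prod := by
        rw [Multiset.map_const', Multiset.prod_replicate]
    _ ≤ _ := Multiset.prod_map_le_prod_map₀ _ _ (fun _ _ => by positivity)
        (fun ρ _ => half_le_norm_sub_moveRoot ξ r ρ)

theorem prod_map_norm_sub_moveRoot_le {ξ z : ℂ} {r : ℝ} (hz : ‖z - ξ‖ = r) (s : Multiset ℂ) :
    (s.map fun ρ => ‖z - moveRoot ξ r ρ‖).prod ≤
      4 ^ Multiset.card s * (s.map fun ρ => ‖z - ρ‖).prod := by
  calc (s.map fun ρ => ‖z - moveRoot ξ r ρ‖).prod ≤ (s.map fun ρ => 4 * ‖z - ρ‖).prod :=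
        Multiset.prod_map_le_prod_map₀ _ _ (fun _ _ => norm_nonneg _)
          (fun ρ _ => norm_sub_moveRoot_le hz ρ)
    _ = _ := by rw [Multiset.prod_map_mul, Multiset.map_const', Multiset.prod_replicate]

theorem Polynomial.exists_norm_eval_center_ge_and_norm_eval_sphere_le (p : ℂ[X]) (ξ : ℂ)
    {r : ℝ} (hr : 0 ≤ r) :
    ∃ q : ℂ[X], ‖p.leadingCoeff‖ * (r / 2) ^ p.natDegree ≤ ‖q.eval ξ‖ ∧
      ∀ z ∈ sphere ξ r, ‖q.eval z‖ ≤ 4 ^ p.natDegree * ‖p.eval z‖ := by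
  have hsplits : p.Splits := IsAlgClosed.splits p
  refine ⟨C p.leadingCoeff * ((p.roots.map (moveRoot ξ r)).map fun ρ => X - C ρ).prod, ?_, ?_⟩
  · rw [norm_eval_C_mul_prod_X_sub_C, Multiset.map_map, hsplits.natDegree_eq_card_roots]
    gcongr
    exact pow_card_le_prod_map_norm_sub_moveRoot ξ hr p.roots
  · intro z hz
    rw [norm_eval_C_mul_prod_X_sub_C, Multiset.map_map, hsplits.eq_prod_roots,
      norm_eval_C_mul_prod_X_sub_C, ← hsplits.eq_prod_roots, hsplits.natDegree_eq_card_roots,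
      mul_left_comm]
    gcongr
    exact prod_map_norm_sub_moveRoot_le (mem_sphere_iff_norm.mp hz) p.roots

theorem stmt_1 (p : Polynomial ℂ) (ξ : ℂ) (r : ℝ) (hr : 0 < r) :
    ∃ c : ℝ, 0 < c ∧ ∀ (f : ℂ → ℂ) (A M : ℝ), 0 < A → 0 ≤ M →
      DifferentiableOn ℂ f (Metric.closedBall ξ r) →
      (∀ z ∈ Metric.closedBall ξ r,
        ‖p.eval z * f z‖ ≤ M * Real.exp (A * ‖z‖)) →
      ‖p.leadingCoeff * f ξ‖ ≤ c * Real.exp (A * (‖ξ‖ + r)) * M := by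
  obtain ⟨q, hq_center, hq_sphere⟩ :=
    p.exists_norm_eval_center_ge_and_norm_eval_sphere_le ξ hr.le
  set d := p.natDegree
  refine ⟨(8 / r) ^ d, by positivity, fun f A M hA hM hf hpf => ?_⟩
  have hmax : ‖q.eval ξ * f ξ‖ ≤ 4 ^ d * (M * Real.exp (A * (‖ξ‖ + r))) := by
    refine Complex.norm_le_of_forall_mem_sphere_norm_le (f := fun z => q.eval z * f z) hr
      (q.differentiable.differentiableOn.mul hf) fun z hz => ?_
    have hz_ball : z ∈ closedBall ξ r := sphere_subset_closedBall hz
    calc ‖q.eval z * f z‖ = ‖q.eval z‖ * ‖f z‖ := norm_mul _ _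
      _ ≤ 4 ^ d * ‖p.eval z‖ * ‖f z‖ := by gcongr; exact hq_sphere z hz
      _ = 4 ^ d * ‖p.eval z * f z‖ := by rw [norm_mul, mul_assoc]
      _ ≤ 4 ^ d * (M * Real.exp (A * ‖z‖)) := by gcongr; exact hpf z hz_ball
      _ ≤ 4 ^ d * (M * Real.exp (A * (‖ξ‖ + r))) := by
        gcongr; exact norm_le_of_mem_closedBall hz_ball
  have hconst : (8 / r) ^ d * (r / 2) ^ d = 4 ^ d := by
    rw [← mul_pow]; congr 1; field_simp; norm_num
  rw [← mul_le_mul_iff_left₀ (by positivity : (0 : ℝ) < (r / 2) ^ d)]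
  calc ‖p.leadingCoeff * f ξ‖ * (r / 2) ^ d = ‖p.leadingCoeff‖ * (r / 2) ^ d * ‖f ξ‖ := by
        rw [norm_mul]; ring
    _ ≤ ‖q.eval ξ * f ξ‖ := by rw [norm_mul]; gcongr
    _ ≤ 4 ^ d * (M * Real.exp (A * (‖ξ‖ + r))) := hmax
    _ = (8 / r) ^ d * Real.exp (A * (‖ξ‖ + r)) * M * (r / 2) ^ d := by rw [← hconst]; ring
end

section
/- Fix a non-zero polynomial p on ℂⁿ, a point ξ = (ξ₁,...,ξₙ) ∈ ℂⁿ, and r > 0. Then there exists a constant ĉ > 0 depending only on p and r such that for every function f holomorphic on the closed polydisk {z ∈ ℂⁿ : |zᵢ - ξᵢ| ≤ r for all i} satisfying |p(z)f(z)| ≤ M e^{A|z|} on that polydisk (for some A > 0, M ≥ 0, with |z| the Euclidean norm), one has |f(ξ)| e^{-√n·A|ξ|} ≤ ĉ e^{nrA} M. -/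
/-- The Euclidean norm on ℂⁿ. -/
noncomputable def enorm' {n : ℕ} (z : Fin n → ℂ) : ℝ :=
  Real.sqrt (∑ i, ‖z i‖ ^ 2)

/-! Some point z₀ of the polydisk has p(z₀) ≠ 0, so on the complex line w ↦ ξ + w • (z₀ - ξ)
the polynomial p restricts to a nonzero polynomial Q of one variable. A circle |w| = ρ ≤ 1 avoiding
the finitely many zeros of Q carries a bound |Q| ≥ ε > 0 independent of f, and the maximum modulus
principle for w ↦ f(ξ + w • (z₀ - ξ)) bounds |f(ξ)| by max |p f| / ε over that circle, where the
Euclidean norm of the point is at most |ξ| + √n r. -/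

open Metric Set

section EuclideanNorm

variable {n : ℕ}

lemma enorm'_eq_norm_toLp (z : Fin n → ℂ) : enorm' z = ‖WithLp.toLp 2 z‖ := by
  simp [EuclideanSpace.norm_eq, enorm']

lemma enorm'_add_le (z w : Fin n → ℂ) : enorm' (z + w) ≤ enorm' z + enorm' w := by
  simpa only [enorm'_eq_norm_toLp, WithLp.toLp_add] using norm_add_le _ _

lemma enorm'_le_sqrt_mul {z : Fin n → ℂ} {r : ℝ} (hr : 0 ≤ r) (hz : ∀ i, ‖z i‖ ≤ r) :
    enorm' z ≤ √n * r := by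
  calc enorm' z ≤ √(∑ _i : Fin n, r ^ 2) :=
        Real.sqrt_le_sqrt (Finset.sum_le_sum fun i _ => pow_le_pow_left₀ (norm_nonneg _) (hz i) 2)
    _ = √n * r := by simp [Real.sqrt_mul, Real.sqrt_sq hr]

lemma enorm'_le_sqrt_mul_enorm' (z : Fin n → ℂ) : enorm' z ≤ √n * enorm' z := by
  rcases n.eq_zero_or_pos with rfl | hn
  · simp [enorm']
  · exact le_mul_of_one_le_left (Real.sqrt_nonneg _)
      (Real.one_le_sqrt.mpr (Nat.one_le_cast.mpr hn))

lemma mul_enorm'_add_sqrt_mul_le (z : Fin n → ℂ) {A r : ℝ} (hA : 0 ≤ A) (hr : 0 ≤ r) :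
    A * (enorm' z + √n * r) ≤ √n * A * enorm' z + n * r * A := by
  have hsqrt : √(n : ℝ) ≤ n := Real.sqrt_le_self_iff.mpr (by rcases n with _ | n <;> simp)
  nlinarith [mul_le_mul_of_nonneg_left (enorm'_le_sqrt_mul_enorm' z) hA,
    mul_le_mul_of_nonneg_left hsqrt (mul_nonneg hA hr)]

end EuclideanNorm

lemma MvPolynomial.exists_mem_pi_eval_ne_zero {σ R : Type*} [CommRing R] [IsDomain R]
    {p : MvPolynomial σ R} (hp : p ≠ 0) (s : σ → Set R) (hs : ∀ i, (s i).Infinite) :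
    ∃ x ∈ univ.pi s, eval x p ≠ 0 := by
  by_contra! h
  exact hp (funext_set s hs fun x hx => by simp [h x hx])

lemma Polynomial.exists_sphere_norm_eval_ge {Q : Polynomial ℂ} (hQ : Q ≠ 0) {R : ℝ} (hR : 0 < R) :
    ∃ ρ ∈ Ioc 0 R, ∃ ε > 0, ∀ w ∈ sphere (0 : ℂ) ρ, ε ≤ ‖Q.eval w‖ := by
  have hfin : (norm '' {a | Q.IsRoot a}).Finite := (Polynomial.finite_setOfPred_isRoot hQ).image _
  obtain ⟨ρ, hρ, hρroot⟩ := ((Ioc_infinite hR).sdiff hfin).nonempty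
  have hnoroot : ∀ w ∈ sphere (0 : ℂ) ρ, Q.eval w ≠ 0 := fun w hw hroot =>
    hρroot ⟨w, hroot, by simpa using hw⟩
  obtain ⟨w₀, hw₀, hmin⟩ := (isCompact_sphere (0 : ℂ) ρ).exists_isMinOn
    (NormedSpace.sphere_nonempty.mpr hρ.1.le) (Q.continuous.norm.continuousOn)
  exact ⟨ρ, hρ, ‖Q.eval w₀‖, norm_pos_iff.mpr (hnoroot w₀ hw₀), fun w hw => hmin hw⟩

lemma Complex.norm_apply_zero_le_of_norm_mul_le_on_sphere {g q : ℂ → ℂ} {ρ ε B : ℝ}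
    (hρ : 0 < ρ) (hε : 0 < ε) (hg : DifferentiableOn ℂ g (closedBall 0 ρ))
    (hq : ∀ w ∈ sphere (0 : ℂ) ρ, ε ≤ ‖q w‖) (hB : ∀ w ∈ sphere (0 : ℂ) ρ, ‖q w * g w‖ ≤ B) :
    ‖g 0‖ ≤ B / ε := by
  have hclosure : closure (ball (0 : ℂ) ρ) = closedBall 0 ρ := closure_ball _ hρ.ne'
  refine Complex.norm_le_of_forall_mem_frontier_norm_le (U := ball 0 ρ) isBounded_ball
    (DifferentiableOn.diffContOnCl (hclosure ▸ hg)) (fun w hw => ?_)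
    (hclosure ▸ mem_closedBall_self hρ.le)
  rw [frontier_ball _ hρ.ne'] at hw
  rw [le_div_iff₀ hε, mul_comm]
  calc ε * ‖g w‖ ≤ ‖q w‖ * ‖g w‖ := by gcongr; exact hq w hw
    _ = ‖q w * g w‖ := (norm_mul _ _).symm
    _ ≤ B := hB w hw

lemma MvPolynomial.eval_aeval_line {σ R : Type*} [CommRing R] (p : MvPolynomial σ R)
    (ξ v : σ → R) (w : R) :
    ((aeval fun i => Polynomial.C (ξ i) + Polynomial.C (v i) * Polynomial.X) p).eval w =
      eval (ξ + w • v) p := by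
  rw [← Polynomial.coe_aeval_eq_eval, comp_aeval_apply, aeval_eq_eval]
  congr 2
  funext i
  simp [mul_comm (v i)]

lemma MvPolynomial.exists_line_sphere_norm_eval_ge {n : ℕ} {p : MvPolynomial (Fin n) ℂ}
    (hp : p ≠ 0) (ξ : Fin n → ℂ) {r : ℝ} (hr : 0 < r) :
    ∃ v : Fin n → ℂ, (∀ i, ‖v i‖ ≤ r) ∧ ∃ ρ ∈ Ioc (0 : ℝ) 1, ∃ ε > 0,
      ∀ w ∈ sphere (0 : ℂ) ρ, ε ≤ ‖eval (ξ + w • v) p‖ := by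
  obtain ⟨z₀, hz₀, hpz₀⟩ := exists_mem_pi_eval_ne_zero hp (fun i => closedBall (ξ i) r)
    fun i => infinite_of_mem_nhds (ξ i) (closedBall_mem_nhds _ hr)
  set v := z₀ - ξ
  set Q := aeval (fun i => Polynomial.C (ξ i) + Polynomial.C (v i) * Polynomial.X) p
  have hQ : ∀ w, Q.eval w = eval (ξ + w • v) p := eval_aeval_line p ξ v
  have hQ0 : Q ≠ 0 := fun h => hpz₀ (by simpa [h, v] using (hQ 1).symm)
  refine ⟨v, fun i => by simpa [v, dist_eq_norm] using hz₀ i trivial, ?_⟩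
  simpa only [hQ] using Q.exists_sphere_norm_eval_ge hQ0 one_pos

theorem stmt_2 {n : ℕ} (p : MvPolynomial (Fin n) ℂ) (hp : p ≠ 0)
    (ξ : Fin n → ℂ) (r : ℝ) (hr : 0 < r) :
    ∃ c : ℝ, 0 < c ∧ ∀ (f : (Fin n → ℂ) → ℂ) (A M : ℝ), 0 < A → 0 ≤ M →
      DifferentiableOn ℂ f {z | ∀ i, ‖z i - ξ i‖ ≤ r} →
      (∀ z, (∀ i, ‖z i - ξ i‖ ≤ r) →
        ‖MvPolynomial.eval z p * f z‖ ≤ M * Real.exp (A * enorm' z)) →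
      ‖f ξ‖ * Real.exp (-(Real.sqrt n * A * enorm' ξ)) ≤
        c * Real.exp (n * r * A) * M := by
  obtain ⟨v, hv, ρ, ⟨hρ0, hρ1⟩, ε, hε, hpε⟩ := MvPolynomial.exists_line_sphere_norm_eval_ge hp ξ hr
  refine ⟨1 / ε, one_div_pos.mpr hε, fun f A M hA hM hf hpf => ?_⟩
  have hstep : ∀ w ∈ closedBall (0 : ℂ) 1, ∀ i, ‖(w • v) i‖ ≤ r := fun w hw i => by
    simpa using (mul_le_of_le_one_left (norm_nonneg _) (mem_closedBall_zero_iff.mp hw)).trans (hv i)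
  have hline : ∀ w ∈ closedBall (0 : ℂ) 1, ∀ i, ‖(ξ + w • v) i - ξ i‖ ≤ r := fun w hw i => by
    simpa using hstep w hw i
  have hfξ : ‖f ξ‖ ≤ M * Real.exp (A * (enorm' ξ + √n * r)) / ε := by
    have hg : DifferentiableOn ℂ (fun w : ℂ => f (ξ + w • v)) (closedBall 0 ρ) :=
      (hf.comp (by fun_prop) hline).mono (closedBall_subset_closedBall hρ1)
    simpa using Complex.norm_apply_zero_le_of_norm_mul_le_on_sphere hρ0 hε hg hpε fun w hw => by
      have hw1 := closedBall_subset_closedBall hρ1 (sphere_subset_closedBall hw)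
      refine (hpf _ (hline w hw1)).trans ?_
      gcongr
      exact (enorm'_add_le _ _).trans (add_le_add_right (enorm'_le_sqrt_mul hr.le (hstep w hw1)) _)
  calc ‖f ξ‖ * Real.exp (-(√n * A * enorm' ξ))
      ≤ M * Real.exp (√n * A * enorm' ξ + n * r * A) / ε * Real.exp (-(√n * A * enorm' ξ)) := by
        gcongr
        exact hfξ.trans (by gcongr; exact mul_enorm'_add_sqrt_mul_le ξ hA.le hr.le)
    _ = 1 / ε * Real.exp (n * r * A) * M := by
        rw [Real.exp_add, Real.exp_neg]
        field_simp
end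

section
/- Let p be a non-zero polynomial on ℂⁿ and F an entire function. If the product pF is of exponential type (i.e., there exist A > 0 and M ≥ 0 with |p(z)F(z)| ≤ M e^{A|z|} for all z), then F itself is of exponential type (i.e., there exist A' > 0 and M' ≥ 0 with |F(z)| ≤ M' e^{A'|z|} for all z). -/
/-- A function on ℂⁿ is of exponential type. -/
def ExpType {n : ℕ} (f : (Fin n → ℂ) → ℂ) : Prop :=
  ∃ A > (0:ℝ), ∃ M ≥ (0:ℝ), ∀ z, ‖f z‖ ≤ M * Real.exp (A * enorm' z)

/-! Choose a direction `e` on which the top homogeneous component `p_d` of `p` does not vanish.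
On every complex line `t ↦ z + t e` the restriction of `p` is then a one-variable polynomial of
degree `d` with the same leading coefficient `p_d(e)`. Its at most `d` roots leave free a circle
`|t| = r` with `1 ≤ r ≤ d + 1` at distance `≥ 1/2` from all of them, on which it is bounded below
by `|p_d(e)| 2^{-d}`; the maximum modulus principle on that disc bounds `|F(z)|` by
`2^d / |p_d(e)|` times the maximum of `|pF|` on the ball of radius `|z| + (d + 1)|e|`. -/

open Polynomial

theorem Finsupp.card_toMultiset_eq_degree {α : Type*} (m : α →₀ ℕ) :
    Multiset.card (Finsupp.toMultiset m) = m.degree :=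
  Finsupp.card_toMultiset m

theorem Finsupp.multiset_prod_map_toMultiset {α M : Type*} [CommMonoid M] (m : α →₀ ℕ) (g : α → M) :
    ((Finsupp.toMultiset m).map g).prod = m.prod fun i k => g i ^ k := by
  classical
  rw [Finset.prod_multiset_map_count, Finsupp.toFinset_toMultiset]
  simp [Finsupp.count_toMultiset, Finsupp.prod]

namespace MvPolynomial

variable {σ R : Type*} [CommRing R]

section AffineSubstitution

variable {f : σ → R[X]}

theorem aeval_monomial_eq_C_mul_multiset_prod (m : σ →₀ ℕ) (a : R) :
    aeval f (monomial m a) = Polynomial.C a * ((Finsupp.toMultiset m).map f).prod := by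
  rw [aeval_monomial, Finsupp.multiset_prod_map_toMultiset, Polynomial.algebraMap_eq]

theorem natDegree_aeval_monomial_le (hf : ∀ i, (f i).natDegree ≤ 1) (m : σ →₀ ℕ) (a : R) :
    (aeval f (monomial m a)).natDegree ≤ m.degree := by
  rw [aeval_monomial_eq_C_mul_multiset_prod]
  refine natDegree_C_mul_le _ _ |>.trans <| natDegree_multiset_prod_le _ |>.trans ?_
  calc ((Finsupp.toMultiset m).map f |>.map natDegree).sum
      ≤ ((Finsupp.toMultiset m).map f |>.map fun _ => 1).sum :=
        Multiset.sum_map_le_sum_map _ _ fun q hq => by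
          obtain ⟨i, -, rfl⟩ := Multiset.mem_map.1 hq
          exact hf i
    _ = m.degree := by
        rw [Multiset.map_const', Multiset.sum_replicate, smul_eq_mul, mul_one, Multiset.card_map,
          Finsupp.card_toMultiset_eq_degree]

theorem coeff_aeval_monomial_degree (hf : ∀ i, (f i).natDegree ≤ 1) (m : σ →₀ ℕ) (a : R) :
    (aeval f (monomial m a)).coeff m.degree = eval (fun i => (f i).coeff 1) (monomial m a) := by
  have hcard : m.degree = Multiset.card ((Finsupp.toMultiset m).map f) * 1 := by
    rw [Multiset.card_map, mul_one, Finsupp.card_toMultiset_eq_degree]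
  rw [aeval_monomial_eq_C_mul_multiset_prod, Polynomial.coeff_C_mul, hcard,
    coeff_multiset_prod_of_natDegree_le _ _ (by simpa using fun i _ => hf i), eval_monomial,
    Multiset.map_map, Finsupp.multiset_prod_map_toMultiset]
  rfl

theorem natDegree_aeval_le_totalDegree (hf : ∀ i, (f i).natDegree ≤ 1) (p : MvPolynomial σ R) :
    (aeval f p).natDegree ≤ p.totalDegree := by
  conv_lhs => rw [p.as_sum, map_sum]
  exact natDegree_sum_le_of_forall_le _ _ fun m hm =>
    (natDegree_aeval_monomial_le hf m _).trans (le_totalDegree hm)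

theorem coeff_aeval_totalDegree (hf : ∀ i, (f i).natDegree ≤ 1) (p : MvPolynomial σ R) :
    (aeval f p).coeff p.totalDegree =
      eval (fun i => (f i).coeff 1) (homogeneousComponent p.totalDegree p) := by
  rw [homogeneousComponent_apply, map_sum, Finset.sum_filter]
  conv_lhs => enter [1, 2]; rw [p.as_sum]
  rw [map_sum, finsetSum_coeff]
  refine Finset.sum_congr rfl fun m hm => ?_
  split_ifs with hdeg
  · rw [← hdeg, coeff_aeval_monomial_degree hf]
  · exact coeff_eq_zero_of_natDegree_lt <| (natDegree_aeval_monomial_le hf m _).trans_lt <|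
      (le_totalDegree hm).lt_of_ne hdeg

end AffineSubstitution

noncomputable def lineRestriction (p : MvPolynomial σ R) (z e : σ → R) : R[X] :=
  aeval (fun i => Polynomial.C (e i) * Polynomial.X + Polynomial.C (z i)) p

theorem eval_lineRestriction (p : MvPolynomial σ R) (z e : σ → R) (t : R) :
    (p.lineRestriction z e).eval t = eval (z + t • e) p := by
  rw [lineRestriction, ← Polynomial.coe_aeval_eq_eval, comp_aeval_apply, aeval_eq_eval₂Hom,
    Algebra.algebraMap_self]
  change eval _ p = _
  congr 2
  funext i
  simp only [map_add, map_mul, Polynomial.aeval_C, Polynomial.aeval_X, Pi.add_apply,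
    Pi.smul_apply, smul_eq_mul, Algebra.algebraMap_self, RingHom.id_apply]
  ring

theorem homogeneousComponent_totalDegree_ne_zero {p : MvPolynomial σ R} (hp : p ≠ 0) :
    homogeneousComponent p.totalDegree p ≠ 0 := by
  obtain ⟨m, hm, hdeg⟩ :=
    Finset.exists_mem_eq_sup p.support (support_nonempty.2 hp) fun s => s.sum fun _ e => e
  intro h
  have := congrArg (coeff m) h
  rw [coeff_homogeneousComponent, if_pos (show m.degree = p.totalDegree from hdeg.symm),
    coeff_zero] at this
  exact mem_support_iff.1 hm this

theorem exists_forall_leadingCoeff_lineRestriction_eq [IsDomain R] [Infinite R]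
    {p : MvPolynomial σ R} (hp : p ≠ 0) :
    ∃ e : σ → R, ∃ c ≠ 0, ∀ z, (p.lineRestriction z e).natDegree = p.totalDegree ∧
      (p.lineRestriction z e).leadingCoeff = c := by
  obtain ⟨e, he⟩ : ∃ e, eval e (homogeneousComponent p.totalDegree p) ≠ 0 := by
    by_contra! h
    exact homogeneousComponent_totalDegree_ne_zero hp (funext fun x => by simp [h x])
  have hcoeff (z : σ → R) :
      (p.lineRestriction z e).coeff p.totalDegree =
        eval e (homogeneousComponent p.totalDegree p) := by
    simpa [lineRestriction] using
      coeff_aeval_totalDegree (fun i => natDegree_linear_le (a := e i) (b := z i)) p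
  refine ⟨e, _, he, fun z => ?_⟩
  have hdeg : (p.lineRestriction z e).natDegree = p.totalDegree :=
    (natDegree_aeval_le_totalDegree (fun _ => natDegree_linear_le) p).antisymm
      (le_natDegree_of_ne_zero (hcoeff z ▸ he))
  exact ⟨hdeg, by rw [leadingCoeff, hdeg, hcoeff]⟩

end MvPolynomial

theorem exists_mem_Icc_forall_half_le_abs_sub (s : Multiset ℝ) :
    ∃ r ∈ Set.Icc (1 : ℝ) (Multiset.card s + 1), ∀ x ∈ s, 1 / 2 ≤ |r - x| := by
  classical
  have hcard : (s.toFinset.image round).card < (Finset.Icc (1 : ℤ) (Multiset.card s + 1)).card :=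
    calc (s.toFinset.image round).card ≤ s.toFinset.card := Finset.card_image_le
      _ ≤ Multiset.card s := Multiset.toFinset_card_le s
      _ < (Finset.Icc (1 : ℤ) (Multiset.card s + 1)).card := by simp
  obtain ⟨k, hk, hk_notMem⟩ := Finset.exists_mem_notMem_of_card_lt_card hcard
  rw [Finset.mem_Icc] at hk
  refine ⟨k, ⟨by exact_mod_cast hk.1, by exact_mod_cast hk.2⟩, fun x hx => ?_⟩
  by_contra! hlt
  -- a point of `s` within `1/2` of the integer `k` rounds to `k`
  refine hk_notMem (Finset.mem_image.2 ⟨x, Multiset.mem_toFinset.2 hx, ?_⟩)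
  rw [round_eq, Int.floor_eq_iff]
  constructor <;> linarith [abs_lt.1 hlt]

theorem Polynomial.norm_leadingCoeff_mul_pow_le_norm_eval {K : Type*} [NormedField K]
    [IsAlgClosed K] {Q : K[X]} {t : K} {δ : ℝ} (hδ : 0 ≤ δ) (h : ∀ ρ ∈ Q.roots, δ ≤ ‖t - ρ‖) :
    ‖Q.leadingCoeff‖ * δ ^ Q.natDegree ≤ ‖Q.eval t‖ := by
  have hroots := IsAlgClosed.card_roots_eq_natDegree (p := Q)
  conv_rhs => rw [← C_leadingCoeff_mul_prod_multiset_X_sub_C hroots]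
  rw [eval_mul, eval_C, eval_multiset_prod, Multiset.map_map, norm_mul, ← hroots]
  gcongr
  calc δ ^ Multiset.card Q.roots = (Q.roots.map fun _ => δ).prod := by simp
    _ ≤ (Q.roots.map fun ρ => ‖t - ρ‖).prod := Multiset.prod_map_le_prod_map₀ _ _ (fun _ _ => hδ) h
    _ = ‖(Q.roots.map fun ρ => t - ρ).prod‖ := Multiset.prod_hom' _ (normHom : K →*₀ ℝ) _
    _ = _ := by simp

theorem norm_leadingCoeff_mul_norm_le_of_norm_eval_mul_le {φ : ℂ → ℂ} (hφ : Differentiable ℂ φ)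
    (Q : ℂ[X]) {B : ℝ} (hB : ∀ t : ℂ, ‖t‖ ≤ Q.natDegree + 1 → ‖Q.eval t * φ t‖ ≤ B) :
    ‖Q.leadingCoeff‖ * ‖φ 0‖ ≤ 2 ^ Q.natDegree * B := by
  obtain ⟨r, ⟨hr1, hrd⟩, hr⟩ := exists_mem_Icc_forall_half_le_abs_sub (Q.roots.map norm)
  rw [Multiset.card_map, IsAlgClosed.card_roots_eq_natDegree] at hrd
  have hr0 : 0 < r := by linarith
  have hsphere :
      ∀ t ∈ frontier (Metric.ball 0 r), ‖Q.leadingCoeff * φ t‖ ≤ 2 ^ Q.natDegree * B := by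
    intro t ht
    rw [frontier_ball 0 hr0.ne', mem_sphere_zero_iff_norm] at ht
    have hlow : ‖Q.leadingCoeff‖ * (1 / 2) ^ Q.natDegree ≤ ‖Q.eval t‖ :=
      Q.norm_leadingCoeff_mul_pow_le_norm_eval (by norm_num) fun ρ hρ =>
        (hr _ (Multiset.mem_map_of_mem _ hρ)).trans (ht ▸ abs_norm_sub_norm_le t ρ)
    calc ‖Q.leadingCoeff * φ t‖
        = 2 ^ Q.natDegree * (‖Q.leadingCoeff‖ * (1 / 2) ^ Q.natDegree * ‖φ t‖) := by
          rw [norm_mul, mul_comm _ ((1 / 2 : ℝ) ^ _), ← mul_assoc, ← mul_assoc, ← mul_pow]; norm_num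
      _ ≤ 2 ^ Q.natDegree * (‖Q.eval t‖ * ‖φ t‖) := by gcongr
      _ ≤ 2 ^ Q.natDegree * B := by
          rw [← norm_mul]; gcongr; exact hB t (ht.le.trans hrd)
  simpa [norm_mul] using Complex.norm_le_of_forall_mem_frontier_norm_le Metric.isBounded_ball
    ((differentiable_const _).mul hφ).diffContOnCl hsphere
    (subset_closure (Metric.mem_ball_self hr0))

theorem enorm'_eq_norm {n : ℕ} (z : Fin n → ℂ) : enorm' z = ‖WithLp.toLp 2 z‖ := by
  simp [enorm', EuclideanSpace.norm_eq]

theorem enorm'_add_smul_le {n : ℕ} (z e : Fin n → ℂ) (t : ℂ) :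
    enorm' (z + t • e) ≤ enorm' z + ‖t‖ * enorm' e := by
  simp only [enorm'_eq_norm, WithLp.toLp_add, WithLp.toLp_smul, ← norm_smul]
  exact norm_add_le _ _

theorem stmt_5 {n : ℕ} (p : MvPolynomial (Fin n) ℂ) (hp : p ≠ 0)
    (F : (Fin n → ℂ) → ℂ) (hF : Differentiable ℂ F)
    (h : ExpType fun z => MvPolynomial.eval z p * F z) : ExpType F := by
  obtain ⟨A, hA, M, hM, hbound⟩ := h
  obtain ⟨e, c, hc, hline⟩ := p.exists_forall_leadingCoeff_lineRestriction_eq hp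
  set d := p.totalDegree
  refine ⟨A, hA, 2 ^ d * (M * Real.exp (A * ((d + 1) * enorm' e))) / ‖c‖, by positivity,
    fun z => ?_⟩
  obtain ⟨hdeg, hlead⟩ := hline z
  have key := norm_leadingCoeff_mul_norm_le_of_norm_eval_mul_le (φ := fun t => F (z + t • e))
    (hF.comp (by fun_prop)) (p.lineRestriction z e)
    (B := M * Real.exp (A * (enorm' z + (d + 1) * enorm' e))) fun t ht => by
      rw [p.eval_lineRestriction]
      refine (hbound _).trans ?_
      gcongr
      refine (enorm'_add_smul_le z e t).trans ?_
      gcongr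
      · exact Real.sqrt_nonneg _
      · rwa [hdeg] at ht
  rw [hlead, hdeg, zero_smul, add_zero] at key
  rw [div_mul_eq_mul_div, le_div_iff₀ (norm_pos_iff.2 hc), mul_comm]
  calc ‖c‖ * ‖F z‖ ≤ 2 ^ d * (M * Real.exp (A * (enorm' z + (d + 1) * enorm' e))) := key
    _ = _ := by rw [mul_add, Real.exp_add]; ring
end

section
/- Let p be a non-zero polynomial on ℂ in one variable, A > 0, and (F_m) a sequence of entire functions with ‖pF_m - G‖_A → 0 for some entire G with ‖G‖_A < ∞. Then there exists an entire function F with G = p·F. -/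
/-!
Divisibility by `p` is tested one root at a time. If `p = (X - a) q` and multiples `p F` approximate
`G` within `ε e^{A|z|}`, then `G a = 0`, so `G = (z - a) H` with `H` entire, and the multiples `q F`
approximate `H` within `ε e^{2A} e^{A|z|}`: where `|z - a| ≥ 1` one simply divides by `|z - a|`,
and on the unit disc around `a` the maximum modulus principle carries the bound over from the
boundary circle, on which `|z - a| = 1`. Induction on the degree of `p` ends with a constant `p`.
-/

open Polynomial Metric Real

/-- `G` lies in the `‖·‖_A`-closure of `p` times the entire functions. -/
def ApproxByMultiples (A : ℝ) (p : ℂ[X]) (G : ℂ → ℂ) : Prop :=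
  ∀ ε > (0 : ℝ), ∃ F : ℂ → ℂ, Differentiable ℂ F ∧
    ∀ z, ‖p.eval z * F z - G z‖ ≤ ε * exp (A * ‖z‖)

theorem Differentiable.dslope {G : ℂ → ℂ} (hG : Differentiable ℂ G) (a : ℂ) :
    Differentiable ℂ (dslope G a) :=
  differentiableOn_univ.mp <| (Complex.differentiableOn_dslope Filter.univ_mem).mpr hG.differentiableOn

theorem eq_sub_mul_dslope_of_eq_zero {G : ℂ → ℂ} {a : ℂ} (hGa : G a = 0) (z : ℂ) :
    G z = (z - a) * dslope G a z := by
  rw [← smul_eq_mul, sub_smul_dslope, hGa, sub_zero]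

theorem norm_le_of_norm_sub_mul_le {H : ℂ → ℂ} (hH : Differentiable ℂ H) {A c : ℝ} (hA : 0 ≤ A)
    (hc : 0 ≤ c) {a : ℂ} (hbound : ∀ z, ‖(z - a) * H z‖ ≤ c * exp (A * ‖z‖)) (z : ℂ) :
    ‖H z‖ ≤ c * exp (2 * A) * exp (A * ‖z‖) := by
  have hle_exp : c * exp (A * ‖z‖) ≤ c * exp (2 * A) * exp (A * ‖z‖) := by
    gcongr
    exact le_mul_of_one_le_right hc (one_le_exp (by positivity))
  by_cases hfar : 1 ≤ ‖z - a‖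
  · calc ‖H z‖ ≤ ‖z - a‖ * ‖H z‖ := le_mul_of_one_le_left (norm_nonneg _) hfar
      _ ≤ c * exp (A * ‖z‖) := by simpa only [norm_mul] using hbound z
      _ ≤ c * exp (2 * A) * exp (A * ‖z‖) := hle_exp
  have hsphere : ∀ w ∈ frontier (ball a 1), ‖H w‖ ≤ c * exp (A * (‖a‖ + 1)) := by
    intro w hw
    rw [frontier_ball a one_ne_zero, mem_sphere_iff_norm] at hw
    calc ‖H w‖ = ‖(w - a) * H w‖ := by rw [norm_mul, hw, one_mul]
      _ ≤ c * exp (A * ‖w‖) := hbound w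
      _ ≤ c * exp (A * (‖a‖ + 1)) := by
        gcongr
        simpa only [hw] using norm_le_norm_add_norm_sub' w a
  have hz : z ∈ closure (ball a 1) := by
    rw [closure_ball a one_ne_zero, mem_closedBall_iff_norm]
    exact (not_le.mp hfar).le
  have hnorm_z : ‖a‖ - 1 ≤ ‖z‖ := by
    have := norm_sub_norm_le a z
    rw [norm_sub_rev] at this
    linarith
  calc ‖H z‖ ≤ c * exp (A * (‖a‖ + 1)) :=
        Complex.norm_le_of_forall_mem_frontier_norm_le isBounded_ball hH.diffContOnCl hsphere hz
    _ = c * exp (2 * A) * exp (A * (‖a‖ - 1)) := by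
        rw [mul_assoc, ← exp_add]
        ring_nf
    _ ≤ c * exp (2 * A) * exp (A * ‖z‖) := by gcongr

namespace ApproxByMultiples

variable {A : ℝ} {p q : ℂ[X]} {G : ℂ → ℂ} {a : ℂ}

theorem eq_zero_of_isRoot (h : ApproxByMultiples A p G) (ha : p.IsRoot a) : G a = 0 := by
  refine norm_le_zero_iff.mp (le_of_forall_pos_le_add fun ε hε => ?_)
  obtain ⟨F, -, hF⟩ := h (ε / exp (A * ‖a‖)) (by positivity)
  have := hF a
  rw [ha.eq_zero, zero_mul, zero_sub, norm_neg, div_mul_cancel₀ _ (exp_pos _).ne'] at this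
  linarith

theorem of_X_sub_C_mul (hA : 0 ≤ A) (hG : Differentiable ℂ G) (hGa : G a = 0)
    (h : ApproxByMultiples A ((X - C a) * q) G) : ApproxByMultiples A q (dslope G a) := by
  intro ε hε
  obtain ⟨F, hF, hbound⟩ := h (ε * exp (-(2 * A))) (by positivity)
  refine ⟨F, hF, fun z => ?_⟩
  have hfactor : ∀ w, (w - a) * (q.eval w * F w - dslope G a w)
      = ((X - C a) * q).eval w * F w - G w := fun w => by
    rw [eval_mul, eval_sub, eval_X, eval_C, eq_sub_mul_dslope_of_eq_zero hGa w]
    ring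
  calc ‖q.eval z * F z - dslope G a z‖
      ≤ ε * exp (-(2 * A)) * exp (2 * A) * exp (A * ‖z‖) :=
        norm_le_of_norm_sub_mul_le ((q.differentiable.mul hF).sub (hG.dslope a)) hA
          (by positivity) (fun w => (hfactor w).symm ▸ hbound w) z
    _ = ε * exp (A * ‖z‖) := by rw [mul_assoc ε, ← exp_add, neg_add_cancel, exp_zero, mul_one]

theorem exists_eq_mul (hA : 0 ≤ A) (hp : p ≠ 0) (hG : Differentiable ℂ G)
    (h : ApproxByMultiples A p G) :
    ∃ F : ℂ → ℂ, Differentiable ℂ F ∧ ∀ z, G z = p.eval z * F z := by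
  induction hn : p.natDegree generalizing p G with
  | zero =>
    obtain ⟨c, rfl⟩ := natDegree_eq_zero.mp hn
    have hc : c ≠ 0 := by simpa using hp
    exact ⟨fun z => G z / c, hG.div_const c, fun z => by rw [eval_C, mul_div_cancel₀ _ hc]⟩
  | succ n ih =>
    obtain ⟨a, ha⟩ := IsAlgClosed.exists_root p (by simp [degree_eq_natDegree hp, hn, Nat.cast_add_one_ne_zero])
    set q := p /ₘ (X - C a)
    have hpq : (X - C a) * q = p := mul_divByMonic_eq_iff_isRoot.mpr ha
    have hq : q ≠ 0 := by
      rintro hq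
      rw [hq, mul_zero] at hpq
      exact hp hpq.symm
    have hqn : q.natDegree = n := by
      rw [natDegree_divByMonic _ (monic_X_sub_C a), hn, natDegree_X_sub_C, Nat.add_sub_cancel]
    have hGa := h.eq_zero_of_isRoot ha
    rw [← hpq] at h
    obtain ⟨F, hF, hGF⟩ := ih hq (hG.dslope a) (h.of_X_sub_C_mul hA hG hGa) hqn
    refine ⟨F, hF, fun z => ?_⟩
    rw [eq_sub_mul_dslope_of_eq_zero hGa z, hGF z, ← hpq, eval_mul, eval_sub, eval_X, eval_C, mul_assoc]

end ApproxByMultiples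

theorem stmt_14_general (p : Polynomial ℂ) (hp : p ≠ 0) (A : ℝ) (hA : 0 < A)
    (F : ℕ → ℂ → ℂ) (hF : ∀ m, Differentiable ℂ (F m))
    (G : ℂ → ℂ) (hG : Differentiable ℂ G)
    (hconv : ∀ ε > (0:ℝ), ∃ N, ∀ m ≥ N, ∀ z,
      ‖p.eval z * F m z - G z‖ ≤ ε * Real.exp (A * ‖z‖)) :
    ∃ Flim : ℂ → ℂ, Differentiable ℂ Flim ∧ ∀ z, G z = p.eval z * Flim z := by
  refine ApproxByMultiples.exists_eq_mul hA.le hp hG fun ε hε => ?_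
  obtain ⟨N, hN⟩ := hconv ε hε
  exact ⟨F N, hF N, hN N le_rfl⟩

theorem stmt_14 (p : Polynomial ℂ) (hp : p ≠ 0) (A : ℝ) (hA : 0 < A)
    (F : ℕ → ℂ → ℂ) (hF : ∀ m, Differentiable ℂ (F m))
    (G : ℂ → ℂ) (hG : Differentiable ℂ G) (C : ℝ)
    (hGb : ∀ z, ‖G z‖ ≤ C * Real.exp (A * ‖z‖))
    (hconv : ∀ ε > (0:ℝ), ∃ N, ∀ m ≥ N, ∀ z,
      ‖p.eval z * F m z - G z‖ ≤ ε * Real.exp (A * ‖z‖)) :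
    ∃ Flim : ℂ → ℂ, Differentiable ℂ Flim ∧ ∀ z, G z = p.eval z * Flim z :=
  stmt_14_general p hp A hA F hF G hG hconv
end
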